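/- arXiv:math/0311124 — 2 statements merged into one kernel-verified Lean document; each statement's English description precedes it below -/
import Mathlib

section
/- If I is a Borel-fixed monomial ideal in R = k[x_1,...,x_r] and P is an associated prime of R/I, then P = (x_1,...,x_j) for some j with 0 ≤ j ≤ r. -/
/-!
Write the associated prime as `P = (I : f)`. The leading monomial `x^d` of any `g ∈ P` lies in `P`:
otherwise `x^d f ∉ I` and `x^d ∉ P`, so `x^d f` has the same colon ideal, and it has fewer terms
outside `I` than `f`, because the leading term of `g` times that of the part of `f` outside `I`
lies in `I`. Hence `P` is a monomial ideal, so, being prime, it is generated by the variables it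
contains. Borel-fixedness turns `X_{a+1} f ∈ I` into `X_a f ∈ I` term by term, so these variables
form an initial segment.
-/

open MvPolynomial

namespace MvPolynomial

variable {σ R : Type*} [CommRing R]

def IsMonomialIdeal (I : Ideal (MvPolynomial σ R)) : Prop :=
  ∀ f ∈ I, ∀ e ∈ f.support, monomial e (1 : R) ∈ I

noncomputable def monomialRemainder (I : Ideal (MvPolynomial σ R)) (f : MvPolynomial σ R) :
    MvPolynomial σ R := by
  classical exact ∑ e ∈ f.support with monomial e (1 : R) ∉ I, monomial e (coeff e f)

variable {I P : Ideal (MvPolynomial σ R)} {f g : MvPolynomial σ R}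

theorem mem_of_forall_monomial_mem (h : ∀ e ∈ f.support, monomial e (1 : R) ∈ I) : f ∈ I := by
  rw [f.as_sum]
  refine I.sum_mem fun e he => ?_
  simpa [C_mul_monomial] using I.mul_mem_left (C (coeff e f)) (h e he)

theorem isMonomialIdeal_span_monomial (S : Set (σ →₀ ℕ)) :
    IsMonomialIdeal (Ideal.span ((fun s => monomial s (1 : R)) '' S)) := by
  intro f hf e he
  rw [mem_ideal_span_monomial_image] at hf ⊢
  intro e' he'
  rw [Finset.mem_singleton.1 (support_monomial_subset he')]
  exact hf e he

open Classical in
theorem coeff_monomialRemainder (e : σ →₀ ℕ) :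
    coeff e (monomialRemainder I f) = if monomial e (1 : R) ∈ I then 0 else coeff e f := by
  simp only [monomialRemainder, coeff_sum, coeff_monomial, Finset.sum_ite_eq', Finset.mem_filter,
    mem_support_iff]
  split_ifs <;> tauto

theorem mem_support_monomialRemainder {e : σ →₀ ℕ} :
    e ∈ (monomialRemainder I f).support ↔ e ∈ f.support ∧ monomial e (1 : R) ∉ I := by
  classical
  rw [mem_support_iff, mem_support_iff, coeff_monomialRemainder]
  split_ifs <;> tauto

theorem sub_monomialRemainder_mem (I : Ideal (MvPolynomial σ R)) (f : MvPolynomial σ R) :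
    f - monomialRemainder I f ∈ I := by
  classical
  refine mem_of_forall_monomial_mem fun e he => ?_
  rw [mem_support_iff, coeff_sub, coeff_monomialRemainder] at he
  by_contra h
  simp [h] at he

theorem card_support_monomialRemainder_monomial_mul_lt {d e : σ →₀ ℕ}
    (he : e ∈ (monomialRemainder I f).support) (hde : monomial (d + e) (1 : R) ∈ I) :
    (monomialRemainder I (monomial d 1 * f)).support.card < (monomialRemainder I f).support.card := by
  classical
  have hsub : (monomialRemainder I (monomial d 1 * f)).support ⊆
      ((monomialRemainder I f).support.erase e).map (addLeftEmbedding d) := by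
    intro y hy
    obtain ⟨hyf, hyI⟩ := mem_support_monomialRemainder.1 hy
    have hcoeff := mem_support_iff.1 hyf
    rw [coeff_monomial_mul'] at hcoeff
    split_ifs at hcoeff with hdy
    · have hy : y = d + (y - d) := (add_tsub_cancel_of_le hdy).symm
      refine Finset.mem_map.2 ⟨y - d, Finset.mem_erase.2 ⟨?_, mem_support_monomialRemainder.2
        ⟨mem_support_iff.2 (by simpa using hcoeff), fun h => hyI ?_⟩⟩, by simpa using hy.symm⟩
      · rintro rfl
        exact hyI (hy ▸ hde)
      · rw [hy, ← mul_one (1 : R), ← monomial_mul]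
        exact I.mul_mem_left _ h
    · exact absurd rfl hcoeff
  calc _ ≤ _ := Finset.card_le_card hsub
    _ < _ := by rw [Finset.card_map]; exact Finset.card_erase_lt_of_mem he

theorem IsMonomialIdeal.monomial_degree_mem_of_colon [NoZeroDivisors R] (m : MonomialOrder σ)
    (hI : IsMonomialIdeal I) (hP : P.IsPrime) (hPf : ∀ g, g ∈ P ↔ g * f ∈ I)
    (hg : g ∈ P) (hg0 : g ≠ 0) : monomial (m.degree g) (1 : R) ∈ P := by
  induction hn : (monomialRemainder I f).support.card using Nat.strong_induction_on
    generalizing f with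
  | _ n ih =>
    set d := m.degree g
    by_cases hdf : monomial d (1 : R) * f ∈ I
    · exact (hPf _).2 hdf
    have hd : monomial d (1 : R) ∉ P := fun h => hdf ((hPf _).1 h)
    have hsub := sub_monomialRemainder_mem I f
    set f₀ := monomialRemainder I f
    have hf₀ : f₀ ≠ 0 := fun h => hdf (I.mul_mem_left _ (by simpa [h] using hsub))
    have hgf₀ : g * f₀ ∈ I := by
      have := I.sub_mem ((hPf g).1 hg) (I.mul_mem_left g hsub)
      rwa [mul_sub, sub_sub_cancel] at this
    have hlead : monomial (d + m.degree f₀) (1 : R) ∈ I := by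
      rw [← m.degree_mul hg0 hf₀]
      exact hI _ hgf₀ _ (m.degree_mem_support (mul_ne_zero hg0 hf₀))
    refine ih _ ?_ (f := monomial d 1 * f) (fun g' => ?_) rfl
    · exact hn ▸ card_support_monomialRemainder_monomial_mul_lt (m.degree_mem_support hf₀) hlead
    · rw [← mul_assoc, ← hPf, hP.mul_mem_iff_mem_or_mem, or_iff_left hd]

theorem isMonomialIdeal_of_monomial_degree_mem (m : MonomialOrder σ)
    (h : ∀ g ∈ P, g ≠ 0 → monomial (m.degree g) (1 : R) ∈ P) : IsMonomialIdeal P := by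
  intro g hg e he
  by_contra heP
  have hg₀ : monomialRemainder P g ∈ P := by
    simpa using P.sub_mem hg (sub_monomialRemainder_mem P g)
  have hg₀0 : monomialRemainder P g ≠ 0 :=
    ne_zero_iff.2 ⟨e, mem_support_iff.1 (mem_support_monomialRemainder.2 ⟨he, heP⟩)⟩
  exact (mem_support_monomialRemainder.1 (m.degree_mem_support hg₀0)).2 (h _ hg₀ hg₀0)

theorem IsMonomialIdeal.of_colon [LinearOrder σ] [WellFoundedGT σ] [NoZeroDivisors R]
    (hI : IsMonomialIdeal I) (hP : P.IsPrime) (hPf : ∀ g, g ∈ P ↔ g * f ∈ I) :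
    IsMonomialIdeal P :=
  isMonomialIdeal_of_monomial_degree_mem MonomialOrder.lex fun _ hg hg0 =>
    hI.monomial_degree_mem_of_colon _ hP hPf hg hg0

theorem IsMonomialIdeal.eq_span_X_of_isPrime (hP : IsMonomialIdeal P) (hprime : P.IsPrime) :
    P = Ideal.span (X '' {i | X i ∈ P}) := by
  refine le_antisymm (fun g hg => mem_ideal_span_X_image.2 fun e he => ?_)
    (Ideal.span_le.2 (by rintro _ ⟨i, hi, rfl⟩; exact hi))
  have := hP g hg e he
  rw [← prod_X_pow_eq_monomial, hprime.prod_mem_iff] at this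
  obtain ⟨i, hi, hXi⟩ := this
  exact ⟨i, hprime.mem_of_pow_mem _ hXi, Finsupp.mem_support_iff.1 hi⟩

theorem IsMonomialIdeal.X_mul_mem_of_shift (hI : IsMonomialIdeal I) {i j : σ}
    (hij : ∀ e, monomial (Finsupp.single j 1 + e) (1 : R) ∈ I →
      monomial (Finsupp.single i 1 + e) (1 : R) ∈ I)
    (hf : X j * f ∈ I) : X i * f ∈ I := by
  refine mem_of_forall_monomial_mem fun y hy => ?_
  rw [support_X_mul] at hy
  obtain ⟨e, he, rfl⟩ := Finset.mem_map.1 hy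
  exact hij e (hI _ hf _ (by simpa [support_X_mul] using he))

end MvPolynomial

theorem Fin.exists_eq_setOf_val_lt {r : ℕ} (V : Set (Fin r))
    (hV : ∀ (a : Fin r) (ha : a.val + 1 < r), ⟨a.val + 1, ha⟩ ∈ V → a ∈ V) :
    ∃ j ≤ r, V = {i | i.val < j} := by
  have hlower : IsLowerSet V := by
    intro b a hab hb
    obtain ⟨k, hk⟩ := Nat.exists_eq_add_of_le (Fin.le_def.1 hab)
    induction k generalizing b with
    | zero => rwa [← Fin.ext hk]
    | succ k ih =>
      have hk' : a.val + k < r := by omega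
      refine ih (b := ⟨a.val + k, hk'⟩) (Fin.le_def.2 (by simp))
        (hV _ (show a.val + k + 1 < r by omega) ?_) rfl
      convert hb
      rw [hk, ← add_assoc]
  rcases hlower.eq_univ_or_Iio with rfl | ⟨a, rfl⟩
  · exact ⟨r, le_rfl, by ext i; simp⟩
  · exact ⟨a.val, a.isLt.le, rfl⟩

namespace MvPolynomial

variable {R : Type*} [CommSemiring R] {r : ℕ}

def IsBorelFixed (I : Ideal (MvPolynomial (Fin r) R)) : Prop :=
  ∀ (J : Fin r →₀ ℕ) (a : Fin r) (ha : a.val + 1 < r),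
    monomial J (1 : R) ∈ I → 0 < J ⟨a.val + 1, ha⟩ →
    monomial (J + Finsupp.single a 1 - Finsupp.single ⟨a.val + 1, ha⟩ 1) (1 : R) ∈ I

theorem IsBorelFixed.monomial_single_add_mem {I : Ideal (MvPolynomial (Fin r) R)}
    (hI : IsBorelFixed I) {a : Fin r} (ha : a.val + 1 < r) {e : Fin r →₀ ℕ}
    (h : monomial (Finsupp.single ⟨a.val + 1, ha⟩ 1 + e) (1 : R) ∈ I) :
    monomial (Finsupp.single a 1 + e) (1 : R) ∈ I := by
  have := hI _ a ha h (by simp)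
  rwa [add_assoc, add_tsub_cancel_left, add_comm] at this

end MvPolynomial

/-- If `I` is a Borel-fixed monomial ideal in `R = k[x_1,...,x_r]` and `P` is an
associated prime of `R/I`, then `P = (x_1,...,x_j)` for some `0 ≤ j ≤ r`. -/
theorem borel_fixed_associated_primes {k : Type*} [Field k] {r : ℕ}
    (I : Ideal (MvPolynomial (Fin r) k))
    (hmono : ∃ S : Set (Fin r →₀ ℕ), I = Ideal.span ((fun J => monomial J (1 : k)) '' S))
    (hborel : ∀ (J : Fin r →₀ ℕ) (a : Fin r) (ha : a.val + 1 < r),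
      monomial J (1 : k) ∈ I → 0 < J ⟨a.val + 1, ha⟩ →
      monomial (J + Finsupp.single a 1 - Finsupp.single ⟨a.val + 1, ha⟩ 1) (1 : k) ∈ I)
    (P : Ideal (MvPolynomial (Fin r) k))
    (hP : IsAssociatedPrime P (MvPolynomial (Fin r) k ⧸ I)) :
    ∃ j ≤ r, P = Ideal.span
      ((fun i => (X i : MvPolynomial (Fin r) k)) '' {i : Fin r | i.val < j}) := by
  have hI : IsMonomialIdeal I := by
    obtain ⟨S, rfl⟩ := hmono
    exact isMonomialIdeal_span_monomial S
  have hB : IsBorelFixed I := hborel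
  obtain ⟨hprime, x, hx⟩ := isAssociatedPrime_iff.1 hP
  obtain ⟨f, rfl⟩ := Ideal.Quotient.mk_surjective x
  have hPf : ∀ g, g ∈ P ↔ g * f ∈ I := fun g => by
    rw [hx, Submodule.mem_colon_singleton, Submodule.mem_bot, ← Ideal.Quotient.eq_zero_iff_mem]
    rfl
  obtain ⟨j, hj, hV⟩ := Fin.exists_eq_setOf_val_lt {i | X i ∈ P} fun a ha hXa =>
    (hPf _).2 (hI.X_mul_mem_of_shift (fun _ => hB.monomial_single_add_mem ha)
      ((hPf _).1 hXa))
  exact ⟨j, hj, hV ▸ (hI.of_colon hprime hPf).eq_span_X_of_isPrime hprime⟩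
end

section
/- Let P be a homogeneous prime ideal in R = k[x_1,...,x_r], and fix the reverse lexicographic order with x_1 > ... > x_r. If x_r ∉ P, then the image of x_r in R/in(P) is a non-zerodivisor; in particular x_r lies in no associated prime of R/in(P). -/
open MvPolynomial

attribute [local instance] MvPolynomial.gradedAlgebra

/-- The leading exponent (multidegree) of a polynomial w.r.t. a monomial order. -/
noncomputable def MonomialOrder.leadExp {k : Type*} [Field k] {r : ℕ}
    (m : MonomialOrder (Fin r)) (f : MvPolynomial (Fin r) k) : Fin r →₀ ℕ :=
  m.toSyn.symm (f.support.sup fun d => m.toSyn d)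

/-- The initial ideal of `P` w.r.t. a monomial order: the ideal generated by the leading
monomials of the nonzero elements of `P`. -/
noncomputable def MonomialOrder.initialIdeal {k : Type*} [Field k] {r : ℕ}
    (m : MonomialOrder (Fin r)) (P : Ideal (MvPolynomial (Fin r) k)) :
    Ideal (MvPolynomial (Fin r) k) :=
  Ideal.span ((fun f => monomial (m.leadExp f) (1 : k)) '' {f | f ∈ P ∧ f ≠ 0})


/-- `a` is smaller than `b` in the (graded) reverse lexicographic order: either `a` has smaller
total degree, or the degrees agree and at the last index where they differ, `a` has the
*larger* exponent. -/
def RevLexLt {r : ℕ} (a b : Fin r →₀ ℕ) : Prop :=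
  (∑ i, a i) < (∑ i, b i) ∨
    ((∑ i, a i) = (∑ i, b i) ∧ ∃ i : Fin r, b i < a i ∧ ∀ j : Fin r, i < j → a j = b j)

/-!
Since `in(P)` is a monomial ideal, it suffices to show: if `f ∈ P` is nonzero and `x_r` divides
`in(f)`, then `in(f) / x_r = in(g)` for some nonzero `g ∈ P`. Replace `f` by its homogeneous
component of the degree of `in(f)`; it lies in `P` and has the same leading monomial. In revlex,
a homogeneous polynomial whose leading monomial contains `x_r` is divisible by `x_r`, so it is
`x_r g`, and `g ∈ P` because `P` is prime and `x_r ∉ P`.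
-/

namespace MvPolynomial

variable {σ R : Type*} [CommSemiring R]

theorem X_dvd_of_forall_mem_support {i : σ} {p : MvPolynomial σ R}
    (h : ∀ d ∈ p.support, d i ≠ 0) : X i ∣ p := by
  rw [X_dvd_iff_modMonomial_eq_zero]
  ext d
  rw [coeff_zero]
  by_cases hd : Finsupp.single i 1 ≤ d
  · exact coeff_modMonomial_of_le p hd
  · rw [coeff_modMonomial_of_not_le p hd, ← notMem_support_iff]
    intro hmem
    exact hd (Finsupp.single_le_iff.mpr (Nat.one_le_iff_ne_zero.mpr (h d hmem)))

end MvPolynomial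

namespace MonomialOrder

section Homogeneous

variable {σ R : Type*} [CommSemiring R] (m : MonomialOrder σ)

theorem degree_homogeneousComponent_degree (f : MvPolynomial σ R) :
    m.degree (homogeneousComponent (m.degree f).degree f) = m.degree f := by
  by_cases hf : f = 0
  · simp [hf]
  have hmem : m.degree f ∈ (homogeneousComponent (m.degree f).degree f).support := by
    rw [mem_support_iff, coeff_homogeneousComponent, if_pos rfl]
    exact m.coeff_degree_ne_zero_iff.mpr hf
  refine m.toSyn.injective
    (le_antisymm (m.degree_le_degree_of_support_subset ?_) (m.le_degree hmem))
  intro d hd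
  rw [mem_support_iff, coeff_homogeneousComponent] at hd
  rw [mem_support_iff]
  exact fun h => hd (by rw [h, ite_self])

end Homogeneous

section RevLex

variable {R : Type*} {r : ℕ} (m : MonomialOrder (Fin r))
  (hrevlex : ∀ a b : Fin r →₀ ℕ, m.toSyn a < m.toSyn b ↔ RevLexLt a b)
  {i : Fin r} (hi : ∀ j, j ≤ i)
include hrevlex hi

-- A monomial of `g` not divisible by `X i` would exceed the leading one in revlex.
theorem X_dvd_of_isHomogeneous [CommSemiring R] {g : MvPolynomial (Fin r) R} {n : ℕ}
    (hg : g.IsHomogeneous n) (hgi : m.degree g i ≠ 0) : X i ∣ g := by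
  have hg0 : g ≠ 0 := by rintro rfl; simp at hgi
  refine X_dvd_of_forall_mem_support fun a ha hai => ?_
  have hdeg : ∀ d ∈ g.support, ∑ j, d j = n := fun d hd => by
    rw [← Finsupp.degree_eq_sum, Finsupp.degree_eq_weight_one]
    exact hg (mem_support_iff.mp hd)
  have hlt : m.toSyn (m.degree g) < m.toSyn a := by
    refine (hrevlex _ _).mpr
      (Or.inr ⟨?_, i, by omega, fun j hj => absurd hj (not_lt.mpr (hi j))⟩)
    rw [hdeg a ha, hdeg _ (m.degree_mem_support hg0)]
  exact (m.le_degree ha).not_gt hlt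

theorem exists_mem_degree_eq_tsub_single [CommRing R] [IsDomain R]
    {P : Ideal (MvPolynomial (Fin r) R)} (hP : P.IsPrime)
    (hhom : P.IsHomogeneous (homogeneousSubmodule (Fin r) R)) (hx : X i ∉ P)
    {f : MvPolynomial (Fin r) R} (hfP : f ∈ P) (hf0 : f ≠ 0) :
    ∃ f' ∈ P, f' ≠ 0 ∧ m.degree f' = m.degree f - Finsupp.single i 1 := by
  by_cases hfi : m.degree f i = 0
  · refine ⟨f, hfP, hf0, Finsupp.ext fun j => ?_⟩
    rcases eq_or_ne j i with rfl | hji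
    · simp [hfi]
    · simp [Finsupp.single_eq_of_ne hji]
  set g := homogeneousComponent (m.degree f).degree f
  have hgdeg : m.degree g = m.degree f := m.degree_homogeneousComponent_degree f
  obtain ⟨g', hg'⟩ : X i ∣ g :=
    m.X_dvd_of_isHomogeneous hrevlex hi (homogeneousComponent_isHomogeneous _ f)
      (hgdeg ▸ hfi)
  have hg'0 : g' ≠ 0 := by rintro rfl; simp [← hgdeg, hg'] at hfi
  refine ⟨g', ?_, hg'0, ?_⟩
  · have hgP : X i * g' ∈ P := hg' ▸ homogeneousComponent_mem_of_mem hhom hfP _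
    exact (hP.mem_or_mem hgP).resolve_left hx
  · rw [← hgdeg, hg', m.degree_mul (X_ne_zero i) hg'0, m.degree_X, add_tsub_cancel_left]

end RevLex

section InitialIdeal

variable {k : Type*} [Field k] {r : ℕ} (m : MonomialOrder (Fin r))

theorem leadExp_eq_degree (f : MvPolynomial (Fin r) k) : m.leadExp f = m.degree f := rfl

theorem mem_initialIdeal_iff {P : Ideal (MvPolynomial (Fin r) k)} {p : MvPolynomial (Fin r) k} :
    p ∈ m.initialIdeal P ↔ ∀ e ∈ p.support, ∃ f ∈ P, f ≠ 0 ∧ m.degree f ≤ e := by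
  rw [initialIdeal, ← Set.image_image (fun s => monomial s (1 : k)),
    mem_ideal_span_monomial_image]
  simp_rw [Set.mem_image, exists_exists_and_eq_and, Set.mem_ofPred_eq, and_assoc,
    leadExp_eq_degree]

variable (hrevlex : ∀ a b : Fin r →₀ ℕ, m.toSyn a < m.toSyn b ↔ RevLexLt a b)
  {i : Fin r} (hi : ∀ j, j ≤ i) {P : Ideal (MvPolynomial (Fin r) k)} (hP : P.IsPrime)
  (hhom : P.IsHomogeneous (homogeneousSubmodule (Fin r) k)) (hx : X i ∉ P)
include hrevlex hi hP hhom hx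

theorem mem_initialIdeal_of_X_mul_mem {g : MvPolynomial (Fin r) k}
    (h : X i * g ∈ m.initialIdeal P) : g ∈ m.initialIdeal P := by
  rw [mem_initialIdeal_iff] at h ⊢
  intro e he
  obtain ⟨f, hfP, hf0, hfe⟩ := h (Finsupp.single i 1 + e)
    (by rwa [mem_support_iff, coeff_X_mul, ← mem_support_iff])
  obtain ⟨f', hf'P, hf'0, hf'⟩ :=
    m.exists_mem_degree_eq_tsub_single hrevlex hi hP hhom hx hfP hf0
  exact ⟨f', hf'P, hf'0, hf' ▸ tsub_le_iff_left.mpr hfe⟩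

theorem isSMulRegular_quotient_initialIdeal :
    IsSMulRegular (MvPolynomial (Fin r) k ⧸ m.initialIdeal P) (X i : MvPolynomial (Fin r) k) :=
  (isSMulRegular_quotient_iff_mem_of_smul_mem (m.initialIdeal P) (X i)).mpr fun _ =>
    m.mem_initialIdeal_of_X_mul_mem hrevlex hi hP hhom hx

end InitialIdeal

end MonomialOrder

/-- Bayer–Stillman: for the reverse lexicographic order, if `P` is a homogeneous
prime with `x_r ∉ P`, then the image of `x_r` in `R/in(P)` is a non-zerodivisor; in particular
`x_r` lies in no associated prime of `R/in(P)`. -/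
theorem last_variable_nonzerodivisor_revlex {k : Type*} [Field k] {r : ℕ} (hr : 0 < r)
    (P : Ideal (MvPolynomial (Fin r) k)) (hP : P.IsPrime)
    (hhom : P.IsHomogeneous (homogeneousSubmodule (Fin r) k))
    (m : MonomialOrder (Fin r))
    (hrevlex : ∀ a b : Fin r →₀ ℕ, m.toSyn a < m.toSyn b ↔ RevLexLt a b)
    (hx : (X ⟨r - 1, by omega⟩ : MvPolynomial (Fin r) k) ∉ P) :
    Ideal.Quotient.mk (m.initialIdeal P) (X ⟨r - 1, by omega⟩ : MvPolynomial (Fin r) k) ∈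
        nonZeroDivisors (MvPolynomial (Fin r) k ⧸ m.initialIdeal P) ∧
      ∀ Q : Ideal (MvPolynomial (Fin r) k),
        IsAssociatedPrime Q (MvPolynomial (Fin r) k ⧸ m.initialIdeal P) →
        (X ⟨r - 1, by omega⟩ : MvPolynomial (Fin r) k) ∉ Q := by
  have hlast : ∀ j : Fin r, j ≤ ⟨r - 1, by omega⟩ := fun j =>
    Fin.le_def.mpr (Nat.le_sub_one_of_lt j.isLt)
  have hreg := m.isSMulRegular_quotient_initialIdeal hrevlex hlast hP hhom hx
  refine ⟨mem_nonZeroDivisors_iff_right.mpr fun z hz => hreg.right_eq_zero_of_smul ?_,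
    fun Q hQ hxQ => ?_⟩
  · exact (mul_comm _ _).trans hz
  · have hzd := biUnion_associatedPrimes_eq_compl_regular (MvPolynomial (Fin r) k)
      (MvPolynomial (Fin r) k ⧸ m.initialIdeal P)
    exact (Set.ext_iff.mp hzd _).mp (Set.mem_biUnion hQ hxQ) hreg
end
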